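/- For every complex number λ, the average of log|1 + λ e^{iθ}| over θ ∈ [-π, π] equals log⁺|λ|, i.e., ∫_{-π}^{π} log|1 + λ e^{iθ}| dθ = 2π · max(0, log|λ|). -/

import Mathlib

open MeasureTheory intervalIntegral Complex

lemma mv_small (l : ℂ) (hl : ‖l‖ < 1) :
    ∫ θ in (-Real.pi)..Real.pi,
        Real.log (‖1 + l * Complex.exp (θ * Complex.I)‖) = 0 := by
  set f : ℂ → ℂ := fun z => Complex.log (1 + l * z) with hf
  have hne : ∀ z ∈ Metric.closedBall (0:ℂ) 1, (1 + l * z).re > 0 := by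
    intro z hz
    simp only [Metric.mem_closedBall, dist_zero_right] at hz
    have h1 : ‖l * z‖ < 1 := by
      rw [norm_mul]
      calc ‖l‖ * ‖z‖ ≤ ‖l‖ * 1 :=
            mul_le_mul_of_nonneg_left (by simpa using hz) (norm_nonneg _)
        _ < 1 := by simpa using hl
    have := Complex.abs_re_le_norm (l * z)
    simp only [Complex.add_re, Complex.one_re]
    nlinarith [abs_lt.mp (lt_of_le_of_lt this h1)]
  have hdiff : ∀ z ∈ Metric.closedBall (0:ℂ) 1, DifferentiableAt ℂ f z := by
    intro z hz
    have : (1 + l * z) ∈ Complex.slitPlane := Or.inl (hne z hz)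
    exact (Complex.differentiableAt_log this).comp (f := fun z : ℂ => 1 + l * z) z (by fun_prop)
  have hc : ContinuousOn f (Metric.closedBall (0:ℂ) 1) :=
    fun z hz => (hdiff z hz).continuousAt.continuousWithinAt
  have key := circleIntegral_sub_center_inv_smul_of_differentiable_on_off_countable
    (one_pos) (Set.countable_empty) hc
    (fun z hz => hdiff z (Metric.ball_subset_closedBall hz.1))
  have hf0 : f 0 = 0 := by simp [hf]
  rw [hf0, smul_zero] at key
  -- unfold circle integral
  rw [circleIntegral] at key
  simp only [deriv_circleMap, circleMap, ofReal_one, one_mul, zero_add, sub_zero,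
    smul_eq_mul] at key
  have key2 : ∫ θ in (0:ℝ)..2 * Real.pi, f (Complex.exp (θ * Complex.I)) = 0 := by
    have : ∀ θ : ℝ, Complex.exp (θ * Complex.I) * Complex.I *
        ((Complex.exp (θ * Complex.I))⁻¹ * f (Complex.exp (θ * Complex.I)))
        = Complex.I * f (Complex.exp (θ * Complex.I)) := by
      intro θ
      have h := Complex.exp_ne_zero (θ * Complex.I)
      field_simp
    simp only [this] at key
    rw [intervalIntegral.integral_const_mul] at key
    simpa [Complex.I_ne_zero] using key
  -- integrability of f ∘ exp on [0, 2π]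
  have hcont : Continuous fun θ : ℝ => f (Complex.exp (θ * Complex.I)) := by
    rw [continuous_iff_continuousAt]
    intro θ
    have hmem : Complex.exp (θ * Complex.I) ∈ Metric.closedBall (0:ℂ) 1 := by
      simp [Metric.mem_closedBall, Complex.norm_exp_ofReal_mul_I]
    exact ((hdiff _ hmem).continuousAt).comp (x := θ)
      (f := fun θ : ℝ => Complex.exp (θ * Complex.I)) (by fun_prop)
  have hint : IntervalIntegrable (fun θ : ℝ => f (Complex.exp (θ * Complex.I)))
      MeasureTheory.volume 0 (2 * Real.pi) := hcont.intervalIntegrable _ _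
  have key3 : ∫ θ in (0:ℝ)..2 * Real.pi,
      Real.log (‖1 + l * Complex.exp (θ * Complex.I)‖) = 0 := by
    have := Complex.reCLM.intervalIntegral_comp_comm hint
    rw [key2] at this
    simp only [map_zero] at this
    rw [← this]
    congr 1
    ext θ
    exact (Complex.log_re _).symm
  -- periodicity to shift the interval
  have hper : Function.Periodic
      (fun θ : ℝ => Real.log (‖1 + l * Complex.exp (θ * Complex.I)‖))
      (2 * Real.pi) := by
    intro θ
    simp only
    congr 3
    push_cast
    rw [add_mul, Complex.exp_add]
    simp [Complex.exp_two_pi_mul_I]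
  have := hper.intervalIntegral_add_eq (-Real.pi) 0
  simp only [zero_add] at this
  have hpi : -Real.pi + 2 * Real.pi = Real.pi := by ring
  rw [hpi] at this
  rw [this, key3]

-- log integrable on [0,1]
lemma log_int01 : IntervalIntegrable Real.log volume 0 1 := by
  have h : IntervalIntegrable (fun x : ℝ => -Real.log x) volume 0 1 := by
    apply intervalIntegral.intervalIntegrable_deriv_of_nonneg (g := fun x => x - x * Real.log x)
    · exact (continuous_id.sub Real.continuous_mul_log).continuousOn
    · intro x hx
      simp only [min_eq_left zero_le_one, max_eq_right zero_le_one] at hx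
      have h1 : HasDerivAt (fun y : ℝ => y * Real.log y) (Real.log x + 1) x := by
        have := (Real.hasDerivAt_log (ne_of_gt hx.1)).const_mul x
        have h2 := (hasDerivAt_id' x).mul (Real.hasDerivAt_log (ne_of_gt hx.1))
        exact h2.congr_deriv (by rw [one_mul, mul_inv_cancel₀ (ne_of_gt hx.1), add_comm])
      exact ((hasDerivAt_id' x).sub h1).congr_deriv (by ring)
    · intro x hx
      simp only [min_eq_left zero_le_one, max_eq_right zero_le_one] at hx
      simp only [neg_nonneg]
      exact Real.log_nonpos hx.1.le hx.2.le
  have h2 := h.neg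
  have heq : (-fun x : ℝ => -Real.log x) = Real.log := by funext x; simp
  rwa [heq] at h2

lemma log_int0_nonneg {b : ℝ} (hb0 : 0 ≤ b) : IntervalIntegrable Real.log volume 0 b := by
  rcases le_total b 1 with hb | hb
  · exact log_int01.mono_set (by
      rw [Set.uIcc_of_le hb0, Set.uIcc_of_le zero_le_one]
      exact Set.Icc_subset_Icc le_rfl hb)
  · exact log_int01.trans (intervalIntegral.intervalIntegrable_log (by
      intro h; rw [Set.uIcc_of_le (by linarith : (1:ℝ) ≤ b)] at h; linarith [h.1]))

lemma log_int0 (b : ℝ) : IntervalIntegrable Real.log volume 0 b := by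
  rcases le_total 0 b with hb | hb
  · exact log_int0_nonneg hb
  · have h := (IntervalIntegrable.iff_comp_neg (a := 0) (b := -b) (f := Real.log)).mp (log_int0_nonneg (b := -b) (by linarith))
    simp only [neg_zero, neg_neg] at h
    have heq : (fun x : ℝ => Real.log (-x)) = Real.log := by
      funext x; rw [Real.log_neg_eq_log]
    rwa [heq] at h

lemma log_int (a b : ℝ) : IntervalIntegrable Real.log volume a b :=
  (log_int0 a).symm.trans (log_int0 b)

lemma logsin_meas : Measurable fun θ : ℝ => Real.log (Real.sin θ) :=
  Real.measurable_log.comp Real.measurable_sin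

lemma logsin_int_half : IntervalIntegrable (fun θ => Real.log (Real.sin θ)) volume 0 (Real.pi/2) := by
  have hD : IntervalIntegrable (fun θ => Real.log (Real.pi/2) - Real.log θ) volume 0 (Real.pi/2) :=
    (_root_.intervalIntegrable_const).sub (log_int 0 _)
  refine hD.mono_fun' logsin_meas.aestronglyMeasurable ?_
  rw [Filter.EventuallyLE, ae_restrict_iff' measurableSet_uIoc]
  refine Filter.Eventually.of_forall fun θ hθ => ?_
  rw [Set.uIoc_of_le (by positivity)] at hθ
  obtain ⟨h0, h2⟩ := hθ
  have hs1 : 2 / Real.pi * θ ≤ Real.sin θ := Real.mul_le_sin h0.le h2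
  have hsp : 0 < Real.sin θ := lt_of_lt_of_le (by positivity) hs1
  have hle1 : Real.sin θ ≤ 1 := Real.sin_le_one θ
  have hlog1 : Real.log (Real.sin θ) ≤ 0 := Real.log_nonpos hsp.le hle1
  have hlog2 : Real.log (2 / Real.pi * θ) ≤ Real.log (Real.sin θ) :=
    Real.log_le_log (by positivity) hs1
  rw [Real.log_mul (by positivity) (ne_of_gt h0), Real.log_div (by norm_num) (ne_of_gt Real.pi_pos)] at hlog2
  simp only [Real.norm_eq_abs, abs_of_nonpos hlog1]
  have : Real.log (Real.pi/2) = Real.log Real.pi - Real.log 2 := Real.log_div (ne_of_gt Real.pi_pos) (by norm_num)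
  linarith

lemma logsin_int_0pi : IntervalIntegrable (fun θ => Real.log (Real.sin θ)) volume 0 Real.pi := by
  have h2 := (logsin_int_half.comp_sub_left Real.pi).symm
  have heq : (fun x => Real.log (Real.sin (Real.pi - x))) = fun θ => Real.log (Real.sin θ) := by
    funext x; rw [Real.sin_pi_sub]
  rw [heq] at h2
  have : Real.pi - Real.pi/2 = Real.pi/2 := by ring
  rw [this, sub_zero] at h2
  exact logsin_int_half.trans h2

lemma periodic_int {g : ℝ → ℝ} {T : ℝ} (hT : 0 < T) (hg : Function.Periodic g T)
    (h0 : IntervalIntegrable g volume 0 T) (a b : ℝ) : IntervalIntegrable g volume a b := by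
  have hseg : ∀ k : ℤ, IntervalIntegrable g volume (k * T) (k * T + T) := by
    intro k
    have h := h0.comp_sub_right (k * T)
    have heq : (fun x => g (x - k * T)) = g := by
      funext x
      have := (hg.zsmul (-k)) x
      simpa [zsmul_eq_mul, neg_mul, ← sub_eq_add_neg] using this
    rw [heq, zero_add, add_comm T ((k:ℝ) * T)] at h
    exact h
  have hNat : ∀ N : ℕ, IntervalIntegrable g volume (-(N * T)) (N * T) := by
    intro N
    induction N with
    | zero => simp
    | succ n ih =>
      have hr := hseg n
      have hl := hseg (-(n+1))
      have e1 : ((-(n+1) : ℤ) : ℝ) * T = -(((n:ℝ)+1) * T) := by push_cast; ring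
      have e2 : ((-(n+1) : ℤ) : ℝ) * T + T = -((n:ℝ) * T) := by push_cast; ring
      have e3 : ((n : ℤ) : ℝ) * T + T = ((n:ℝ)+1) * T := by push_cast; ring
      have e4 : ((n : ℤ) : ℝ) * T = (n:ℝ) * T := by push_cast; ring
      rw [e2, e1] at hl
      rw [e3, e4] at hr
      have := hl.trans (ih.trans hr)
      push_cast
      exact this
  obtain ⟨N, hN⟩ := exists_nat_ge (max |a| |b| / T)
  have hNT : max |a| |b| ≤ N * T := by
    rw [div_le_iff₀ hT] at hN; linarith
  refine (hNat N).mono_set ?_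
  intro x hx
  rw [Set.uIcc_of_le (by nlinarith [abs_nonneg a, le_max_left |a| |b|] : -((N:ℝ) * T) ≤ (N:ℝ) * T)]
  rcases Set.mem_uIcc.mp hx with ⟨h1, h2⟩ | ⟨h1, h2⟩ <;>
    constructor <;>
    [ linarith [neg_abs_le a, le_max_left |a| |b|];
      linarith [le_abs_self b, le_max_right |a| |b|];
      linarith [neg_abs_le b, le_max_right |a| |b|];
      linarith [le_abs_self a, le_max_left |a| |b|] ]

lemma logsin_int (a b : ℝ) :
    IntervalIntegrable (fun θ => Real.log (Real.sin θ)) volume a b := by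
  refine periodic_int Real.pi_pos (fun x => ?_) logsin_int_0pi a b
  simp only [Real.sin_add_pi, Real.log_neg_eq_log]

lemma mv_unit (l : ℂ) (hl : ‖l‖ = 1) :
    ∫ θ in (-Real.pi)..Real.pi,
        Real.log (‖1 + l * Complex.exp (θ * Complex.I)‖) = 0 := by
  set α := Complex.arg l with hα
  have hle : l = Complex.exp (α * Complex.I) := by
    have := Complex.norm_mul_exp_arg_mul_I l
    rw [hl, Complex.ofReal_one, one_mul] at this
    exact this.symm
  have him : ∀ θ : ℝ, (l * Complex.exp (θ * Complex.I)).im = Real.sin (θ + α) := by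
    intro θ
    rw [hle, ← Complex.exp_add]
    have : (α : ℂ) * Complex.I + θ * Complex.I = ((θ + α : ℝ) : ℂ) * Complex.I := by
      push_cast; ring
    rw [this, Complex.exp_ofReal_mul_I_im]
  -- a.e. the angle avoids the singularity
  have hES : ∀ᵐ θ : ℝ, Real.sin (θ + α) ≠ 0 := by
    have hc : ({θ : ℝ | Real.sin (θ + α) = 0}).Countable := by
      refine Set.Countable.mono ?_ (Set.countable_range fun n : ℤ => (n : ℝ) * Real.pi - α)
      intro θ hθ
      obtain ⟨n, hn⟩ := Real.sin_eq_zero_iff.mp hθ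
      refine ⟨n, ?_⟩
      show (n : ℝ) * Real.pi - α = θ
      linarith
    have h0 := hc.measure_zero volume
    rw [ae_iff]
    simpa using h0
  set bound : ℝ → ℝ := fun θ => Real.log 2 - Real.log (Real.sin (θ + α)) with hbound
  have hbint : IntervalIntegrable bound volume (-Real.pi) Real.pi := by
    refine _root_.intervalIntegrable_const.sub ?_
    have h := (logsin_int (-Real.pi + α) (Real.pi + α)).comp_add_right α
    simpa using h
  set r : ℕ → ℝ := fun n => 1 - 1/(n+2) with hrdef
  have hr0 : ∀ n : ℕ, 0 < r n ∧ r n < 1 := by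
    intro n
    have h2 : (0:ℝ) < (n:ℝ) + 2 := by positivity
    constructor
    · have : 1/((n:ℝ)+2) < 1 := by rw [div_lt_one h2]; linarith
      simp only [hrdef]; linarith
    · have : 0 < 1/((n:ℝ)+2) := by positivity
      simp only [hrdef]; linarith
  have hrt : Filter.Tendsto r Filter.atTop (nhds 1) := by
    have h : Filter.Tendsto (fun n : ℕ => 1/((n:ℝ)+2)) Filter.atTop (nhds 0) := by
      simp only [one_div]
      exact Filter.Tendsto.comp tendsto_inv_atTop_zero
        (Filter.tendsto_atTop_add_const_right _ 2 tendsto_natCast_atTop_atTop)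
    have h2 := Filter.Tendsto.sub (tendsto_const_nhds (x := (1:ℝ))) h
    rw [hrdef]
    simpa [one_div] using h2
  set F : ℕ → ℝ → ℝ := fun n θ =>
    Real.log (‖1 + ((r n : ℝ) : ℂ) * l * Complex.exp (θ * Complex.I)‖) with hF
  have hFi : ∀ n, (∫ θ in (-Real.pi)..Real.pi, F n θ) = 0 := by
    intro n
    have : ‖((r n : ℝ) : ℂ) * l‖ < 1 := by
      rw [norm_mul, hl, mul_one, Complex.norm_real, Real.norm_eq_abs, abs_of_pos (hr0 n).1]
      exact (hr0 n).2
    have h := mv_small (((r n : ℝ) : ℂ) * l) this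
    simpa [← mul_assoc] using h
  -- key pointwise estimate
  have hkey : ∀ (t : ℝ), 0 ≤ t → t ≤ 1 → ∀ θ : ℝ, Real.sin (θ + α) ≠ 0 →
      |Real.log (‖1 + (t : ℂ) * l * Complex.exp (θ * Complex.I)‖)| ≤ bound θ := by
    intro t ht0 ht1 θ hθ
    set w := l * Complex.exp (θ * Complex.I) with hw
    have habsw : ‖w‖ = 1 := by
      rw [hw, norm_mul, hl, one_mul, Complex.norm_exp_ofReal_mul_I]
    have hwsq : w.re ^ 2 + w.im ^ 2 = 1 := by
      have := Complex.sq_norm w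
      rw [habsw, Complex.normSq_apply] at this
      nlinarith [this]
    set z := 1 + (t : ℂ) * w with hz
    have hzre : z.re = 1 + t * w.re := by simp [hz, Complex.add_re, Complex.mul_re]
    have hzim : z.im = t * w.im := by simp [hz, Complex.add_im, Complex.mul_im]
    have hsq : w.im ^ 2 ≤ (‖z‖) ^ 2 := by
      have h := Complex.sq_norm z
      rw [Complex.normSq_apply, hzre, hzim] at h
      nlinarith [hwsq, sq_nonneg (t + w.re)]
    have hlow : |w.im| ≤ ‖z‖ := by
      nlinarith [abs_nonneg w.im, norm_nonneg z, _root_.sq_abs w.im]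
    have hup : ‖z‖ ≤ 2 := by
      calc ‖z‖ ≤ ‖(1:ℂ)‖ + ‖(t:ℂ) * w‖ := by
            rw [hz]; exact norm_add_le _ _
        _ = 1 + t * 1 := by
            rw [norm_one, norm_mul, habsw, Complex.norm_real, Real.norm_eq_abs, _root_.abs_of_nonneg ht0]
        _ ≤ 2 := by linarith
    have hy : w.im = Real.sin (θ + α) := him θ
    have hyne : w.im ≠ 0 := by rw [hy]; exact hθ
    have hypos : 0 < |w.im| := abs_pos.mpr hyne
    have hzpos : 0 < ‖z‖ := lt_of_lt_of_le hypos hlow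
    have hyle1 : |w.im| ≤ 1 := by
      calc |w.im| ≤ ‖w‖ := Complex.abs_im_le_norm w
        _ = 1 := habsw
    have hlogy : Real.log |w.im| ≤ 0 := Real.log_nonpos (abs_nonneg _) hyle1
    have hgoal : |Real.log (‖z‖)| ≤ Real.log 2 - Real.log |w.im| := by
      rw [abs_le]
      constructor
      · have h1 : Real.log |w.im| ≤ Real.log (‖z‖) :=
          Real.log_le_log hypos hlow
        have h2 : (0:ℝ) ≤ Real.log 2 := Real.log_nonneg (by norm_num)
        linarith
      · have h1 : Real.log (‖z‖) ≤ Real.log 2 :=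
          Real.log_le_log hzpos hup
        linarith
    have hbz : bound θ = Real.log 2 - Real.log |w.im| := by
      rw [hbound]
      simp only
      rw [hy, Real.log_abs]
    rw [hbz]
    have : 1 + (t : ℂ) * l * Complex.exp (θ * Complex.I) = z := by rw [hz, hw]; ring
    rw [this]
    exact hgoal
  -- dominated convergence
  have hmeas : ∀ n : ℕ, AEStronglyMeasurable (F n)
      (volume.restrict (Set.uIoc (-Real.pi) Real.pi)) := by
    intro n
    have hc : Continuous fun θ : ℝ =>
        ‖1 + ((r n : ℝ) : ℂ) * l * Complex.exp (θ * Complex.I)‖ :=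
      continuous_norm.comp (by fun_prop)
    exact (Real.measurable_log.comp hc.measurable).aestronglyMeasurable
  have hdct := intervalIntegral.tendsto_integral_filter_of_dominated_convergence
    (μ := volume) (a := -Real.pi) (b := Real.pi)
    (F := F) (f := fun θ => Real.log (‖1 + l * Complex.exp (θ * Complex.I)‖))
    bound
    (Filter.Eventually.of_forall hmeas)
    (Filter.Eventually.of_forall fun n => by
      filter_upwards [hES] with θ hθ _
      exact hkey (r n) (hr0 n).1.le (hr0 n).2.le θ hθ)
    hbint
    (by
      filter_upwards [hES] with θ hθ _
      have hne : (1 + l * Complex.exp (θ * Complex.I)) ≠ 0 := by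
        intro h
        have : (1 + l * Complex.exp (θ * Complex.I)).im = 0 := by rw [h]; simp
        rw [Complex.add_im, Complex.one_im, zero_add, him θ] at this
        exact hθ this
      have hcabs : ContinuousAt (fun t : ℝ =>
          ‖1 + (t : ℂ) * l * Complex.exp (θ * Complex.I)‖) 1 :=
        (continuous_norm.comp (by fun_prop :
          Continuous fun t : ℝ => 1 + (t : ℂ) * l * Complex.exp (θ * Complex.I))).continuousAt
      have hlogc : ContinuousAt Real.log
          (‖1 + ((1:ℝ) : ℂ) * l * Complex.exp (θ * Complex.I)‖) := by
        apply Real.continuousAt_log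
        simp only [Complex.ofReal_one, one_mul]
        exact norm_ne_zero_iff.mpr hne
      have hG := ContinuousAt.comp (x := (1:ℝ))
        (f := fun t : ℝ => ‖1 + (t : ℂ) * l * Complex.exp (θ * Complex.I)‖)
        (g := Real.log) hlogc hcabs
      have := (hG.tendsto).comp hrt
      simpa [Function.comp_def, hF] using this)
  simp only [hFi] at hdct
  exact (tendsto_nhds_unique tendsto_const_nhds hdct).symm

theorem circle_average_log_abs_one_add (l : ℂ) :
    ∫ θ in (-Real.pi)..Real.pi,
        Real.log (‖1 + l * Complex.exp (θ * Complex.I)‖)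
      = 2 * Real.pi * max 0 (Real.log (‖l‖)) := by
  rcases lt_trichotomy (‖l‖) 1 with h | h | h
  · rw [mv_small l h]
    have hlog : Real.log (‖l‖) ≤ 0 := by
      rcases eq_or_ne l 0 with rfl | hne
      · simp
      · exact Real.log_nonpos (norm_nonneg l) h.le
    rw [max_eq_left hlog, mul_zero]
  · rw [mv_unit l h, h, Real.log_one, max_self, mul_zero]
  · -- |l| > 1
    have hl0 : l ≠ 0 := by
      intro h0; rw [h0] at h; simp at h; linarith
    have habsinv : ‖l⁻¹‖ < 1 := by
      rw [norm_inv]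
      rw [inv_lt_one_iff₀]
      right; exact h
    have hptws : ∀ θ : ℝ,
        Real.log (‖1 + l * Complex.exp (θ * Complex.I)‖)
        = Real.log (‖l‖)
          + Real.log (‖1 + l⁻¹ * Complex.exp ((-θ : ℝ) * Complex.I)‖) := by
      intro θ
      have hexpne : Complex.exp (θ * Complex.I) ≠ 0 := Complex.exp_ne_zero _
      have hfact : 1 + l * Complex.exp (θ * Complex.I)
          = (l * Complex.exp (θ * Complex.I)) * (1 + l⁻¹ * Complex.exp ((-θ : ℝ) * Complex.I)) := by
        have hexpinv : Complex.exp ((-θ : ℝ) * Complex.I) = (Complex.exp (θ * Complex.I))⁻¹ := by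
          rw [← Complex.exp_neg]
          congr 1
          push_cast
          ring
        field_simp [hexpinv]
        have he : Complex.exp (θ * Complex.I) * Complex.exp (-(θ * Complex.I)) = 1 := by
          rw [← Complex.exp_add]; simp
        have he2 : Complex.exp (Complex.I * ((-θ : ℝ) : ℂ)) = Complex.exp (-(θ * Complex.I)) := by
          congr 1; push_cast; ring
        linear_combination -he - Complex.exp (θ * Complex.I) * he2
      rw [hfact, norm_mul, norm_mul, Complex.norm_exp_ofReal_mul_I, mul_one]
      have hne2 : ‖1 + l⁻¹ * Complex.exp ((-θ : ℝ) * Complex.I)‖ ≠ 0 := by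
        rw [norm_ne_zero_iff]
        intro h0
        have : ‖l⁻¹ * Complex.exp ((-θ : ℝ) * Complex.I)‖ = 1 := by
          have : l⁻¹ * Complex.exp ((-θ : ℝ) * Complex.I) = -1 := by
            linear_combination h0
          rw [this]; simp
        rw [norm_mul, Complex.norm_exp_ofReal_mul_I, mul_one] at this
        rw [this] at habsinv
        exact absurd habsinv (by norm_num)
      rw [Real.log_mul (by positivity) hne2]
    rw [intervalIntegral.integral_congr (g := fun θ => Real.log (‖l‖)
      + Real.log (‖1 + l⁻¹ * Complex.exp ((-θ : ℝ) * Complex.I)‖))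
      (fun θ _ => hptws θ)]
    have hcont2 : Continuous fun θ : ℝ =>
        Real.log (‖1 + l⁻¹ * Complex.exp ((-θ : ℝ) * Complex.I)‖) := by
      rw [continuous_iff_continuousAt]
      intro θ
      have hne : (1 + l⁻¹ * Complex.exp ((-θ : ℝ) * Complex.I)) ≠ 0 := by
        intro h0
        have h1 : ‖l⁻¹ * Complex.exp ((-θ : ℝ) * Complex.I)‖ = 1 := by
          have : l⁻¹ * Complex.exp ((-θ : ℝ) * Complex.I) = -1 := by linear_combination h0
          rw [this]; simp
        rw [norm_mul, Complex.norm_exp_ofReal_mul_I, mul_one] at h1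
        rw [h1] at habsinv
        exact absurd habsinv (by norm_num)
      have hcabs : ContinuousAt (fun θ : ℝ =>
          ‖1 + l⁻¹ * Complex.exp ((-θ : ℝ) * Complex.I)‖) θ :=
        (continuous_norm.comp (by fun_prop :
          Continuous fun θ : ℝ => 1 + l⁻¹ * Complex.exp ((-θ : ℝ) * Complex.I))).continuousAt
      exact ContinuousAt.comp (x := θ)
        (f := fun θ : ℝ => ‖1 + l⁻¹ * Complex.exp ((-θ : ℝ) * Complex.I)‖)
        (g := Real.log) (Real.continuousAt_log (norm_ne_zero_iff.mpr hne)) hcabs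
    rw [intervalIntegral.integral_add _root_.intervalIntegrable_const
      (hcont2.intervalIntegrable _ _)]
    have hI2 : (∫ θ in (-Real.pi)..Real.pi,
        Real.log (‖1 + l⁻¹ * Complex.exp ((-θ : ℝ) * Complex.I)‖)) = 0 := by
      have := intervalIntegral.integral_comp_neg (a := -Real.pi) (b := Real.pi)
        (fun x : ℝ => Real.log (‖1 + l⁻¹ * Complex.exp ((x : ℝ) * Complex.I)‖))
      simp only [neg_neg] at this
      rw [this, mv_small l⁻¹ habsinv]
    rw [hI2, add_zero, intervalIntegral.integral_const]
    have hmax : max 0 (Real.log (‖l‖)) = Real.log (‖l‖) :=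
      max_eq_right (Real.log_pos h).le
    rw [hmax, smul_eq_mul]
    ring
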